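/- arXiv:1203.4324 — 2 statements merged into one kernel-verified Lean document; each statement's English description precedes it below -/
import Mathlib

section
/- If f is an incentive compatible social choice function from profiles of strict total orders on V onto V, and |V| ≥ 3, then f is a dictatorship: there exists an agent i such that for every preference profile, f outputs the top-ranked alternative of agent i. -/
/-!
Incentive compatibility forces Maskin monotonicity: if `f θ = w` and every agent's lower contour
set of `w` only grows, the outcome stays `w`. With surjectivity this gives unanimity and
Pareto optimality, so on profiles where everyone ranks the same few alternatives on top, `f`
picks one of them. Call a coalition `U` decisive for `x` over `y` if `f` picks `x` when `U`
ranks `x ≻ y` and everyone else `y ≻ x` on top. Comparing three-alternative profiles with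
these pair profiles shows that decisiveness for one pair spreads to all pairs and is closed
under intersection; a decisive coalition of minimal size is therefore a singleton `{i}`,
and `i` is a dictator.
-/

open Function

namespace GibbardSatterthwaite

abbrev Pref (V : Type) := {r : V → V → Prop // IsStrictTotalOrder V r}

section OfList

variable {V : Type} [Fintype V] [DecidableEq V]

noncomputable def listKey (l : List V) (v : V) : ℕ ×ₗ Fin (Fintype.card V) :=
  toLex (l.idxOf v, Fintype.equivFin V v)

lemma listKey_injective (l : List V) : Injective (listKey l) := fun _ _ h =>
  (Fintype.equivFin V).injective (Prod.ext_iff.mp (toLex.injective h)).2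

/-- The elements of `l` on top in the order of `l`, the others below them in a fixed order;
`r u v` means that `v` is preferred to `u`. -/
noncomputable def ofList (l : List V) : Pref V :=
  ⟨InvImage (· > ·) (listKey l),
    { toTrichotomous := InvImage.trichotomous (listKey_injective l) }⟩

lemma ofList_val_of_idxOf_lt {l : List V} {u v : V} (h : l.idxOf v < l.idxOf u) :
    (ofList l).val u v :=
  Prod.Lex.toLex_lt_toLex.mpr (Or.inl h)

lemma ofList_val_iff {l : List V} {v w : V} (hw : w ∈ l) :
    (ofList l).val v w ↔ v ∉ l.take (l.idxOf w + 1) := by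
  have hw' := List.idxOf_lt_length_of_mem hw
  have hidx : l.idxOf w < l.idxOf v ↔ v ∉ l.take (l.idxOf w + 1) := by
    by_cases hv : v ∈ l
    · rw [List.mem_take_iff_idxOf_lt hv]; omega
    · simp only [List.idxOf_of_notMem hv, hw', true_iff]
      exact fun h => hv (List.mem_of_mem_take h)
  rw [← hidx]
  refine ⟨fun h => (Prod.Lex.toLex_lt_toLex.mp h).resolve_right ?_, ofList_val_of_idxOf_lt⟩
  rintro ⟨heq, hlt⟩
  rw [(List.idxOf_inj hw).mp heq] at hlt
  exact lt_irrefl _ hlt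

end OfList

section IncentiveCompatible

variable {ι V : Type} [DecidableEq ι] {f : (ι → Pref V) → V}

def IncentiveCompatible (f : (ι → Pref V) → V) : Prop :=
  ∀ (θ : ι → Pref V) (i : ι) (p : Pref V), ¬ (θ i).val (f θ) (f (update θ i p))

lemma IncentiveCompatible.apply_update_eq (hic : IncentiveCompatible f)
    {θ : ι → Pref V} {i : ι} {p : Pref V} {w : V} (hθ : f θ = w)
    (h : ∀ v, (θ i).val v w → p.val v w) : f (update θ i p) = w := by
  have hi : ¬ (θ i).val w (f (update θ i p)) := hθ ▸ hic θ i p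
  have hp : ¬ p.val (f (update θ i p)) w := by
    simpa [hθ] using hic (update θ i p) i (θ i)
  exact (θ i).2.trichotomous _ _ (fun h' => hp (h _ h')) hi

variable [Fintype ι]

lemma IncentiveCompatible.maskin_monotone (hic : IncentiveCompatible f)
    {θ θ' : ι → Pref V} {w : V} (hθ : f θ = w)
    (h : ∀ i v, (θ i).val v w → (θ' i).val v w) : f θ' = w := by
  suffices ∀ s : Finset ι, f (s.piecewise θ' θ) = w by simpa using this Finset.univ
  intro s
  induction s using Finset.induction_on with
  | empty => simpa using hθ
  | insert j s hj ih =>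
    rw [Finset.piecewise_insert]
    refine hic.apply_update_eq ih fun v hv => h j v ?_
    rwa [Finset.piecewise_eq_of_notMem _ _ _ hj] at hv

lemma IncentiveCompatible.apply_eq_of_forall_top (hic : IncentiveCompatible f) (hf : Surjective f)
    {θ : ι → Pref V} {a : V} (h : ∀ i v, v ≠ a → (θ i).val v a) : f θ = a := by
  obtain ⟨σ, hσ⟩ := hf a
  exact hic.maskin_monotone hσ fun i v hv => h i v (by rintro rfl; exact (σ i).2.irrefl v hv)

variable [DecidableEq V] [Fintype V]

lemma IncentiveCompatible.not_forall_val_apply (hic : IncentiveCompatible f) (hf : Surjective f)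
    {θ : ι → Pref V} {x : V} (hxw : x ≠ f θ) : ¬ ∀ i, (θ i).val (f θ) x := by
  intro h
  have hw : f (fun _ => ofList [x, f θ]) = f θ := by
    refine hic.maskin_monotone rfl fun i v hv => (ofList_val_iff (by simp)).mpr ?_
    have hvx : v ≠ x := by rintro rfl; exact (θ i).2.irrefl v ((θ i).2.trans _ _ _ hv (h i))
    have hvw : v ≠ f θ := by rintro rfl; exact (θ i).2.irrefl _ hv
    simp [hxw, hvx, hvw]
  have hx : f (fun _ => ofList [x, f θ]) = x := by
    refine hic.apply_eq_of_forall_top hf fun _ v hv => ofList_val_of_idxOf_lt ?_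
    simp [hv.symm]
  exact hxw (hx.symm.trans hw)

lemma IncentiveCompatible.apply_ofList_mem (hic : IncentiveCompatible f) (hf : Surjective f)
    {L : ι → List V} {l : List V} (hl : l ≠ []) (hL : ∀ i v, v ∈ L i ↔ v ∈ l) :
    f (fun i => ofList (L i)) ∈ l := by
  by_contra hw
  obtain ⟨x, hx⟩ := List.exists_mem_of_ne_nil l hl
  refine hic.not_forall_val_apply hf (fun h => hw (h ▸ hx)) fun i => ofList_val_of_idxOf_lt ?_
  rw [List.idxOf_of_notMem (mt (hL i _).mp hw)]
  exact List.idxOf_lt_length_of_mem ((hL i x).mpr hx)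

lemma IncentiveCompatible.apply_ofList_eq (hic : IncentiveCompatible f)
    {L L' : ι → List V} {w : V} (hL : f (fun i => ofList (L i)) = w)
    (h : ∀ i, w ∈ L' i ∧
      (L' i).take ((L' i).idxOf w + 1) ⊆ (L i).take ((L i).idxOf w + 1)) :
    f (fun i => ofList (L' i)) = w := by
  refine hic.maskin_monotone hL fun i v hv => ?_
  obtain ⟨hw', hsub⟩ := h i
  have hw : w ∈ L i :=
    List.mem_of_mem_take (hsub ((List.mem_take_iff_idxOf_lt hw').mpr (Nat.lt_succ_self _)))
  rw [ofList_val_iff hw] at hv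
  exact (ofList_val_iff hw').mpr fun h' => hv (hsub h')

end IncentiveCompatible

section Decisive

variable {ι V : Type} [DecidableEq ι] [Fintype ι] [DecidableEq V] [Fintype V]
  {f : (ι → Pref V) → V}

noncomputable def pairProfile (U : Finset ι) (x y : V) : ι → Pref V :=
  fun i => ofList (if i ∈ U then [x, y] else [y, x])

def Decisive (f : (ι → Pref V) → V) (U : Finset ι) (x y : V) : Prop :=
  f (pairProfile U x y) = x

lemma pairProfile_compl (U : Finset ι) (x y : V) : pairProfile Uᶜ y x = pairProfile U x y := by
  funext i
  by_cases hi : i ∈ U <;> simp [pairProfile, hi]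

lemma IncentiveCompatible.decisive_univ
    (hic : IncentiveCompatible f) (hf : Surjective f) (x y : V) :
    Decisive f Finset.univ x y :=
  hic.apply_eq_of_forall_top hf fun _ v hv => ofList_val_of_idxOf_lt (by simp [hv.symm])

lemma IncentiveCompatible.not_decisive_empty
    (hic : IncentiveCompatible f) (hf : Surjective f) {x y : V}
    (hxy : x ≠ y) : ¬ Decisive f ∅ x y := by
  have h := hic.decisive_univ hf y x
  rw [Decisive, ← pairProfile_compl, Finset.compl_univ] at h
  exact fun h' => hxy (h'.symm.trans h)

lemma IncentiveCompatible.decisive_compl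
    (hic : IncentiveCompatible f) (hf : Surjective f) {U : Finset ι}
    {x y : V} (h : ¬ Decisive f U x y) : Decisive f Uᶜ y x := by
  have hmem : f (pairProfile U x y) ∈ [x, y] :=
    hic.apply_ofList_mem hf (List.cons_ne_nil _ _) fun i v => by split_ifs <;> simp [or_comm]
  simp only [List.mem_cons, List.not_mem_nil, or_false] at hmem
  rw [Decisive, pairProfile_compl]
  exact hmem.resolve_left h

/-- On the profile where `U ∩ W` ranks `x ≻ y ≻ z`, `U \ W` ranks `z ≻ x ≻ y` and the rest
`y ≻ z ≻ x`, monotonicity towards the pair profiles rules out `y` (by `hU`) and `z`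
(by `hW`). -/
lemma IncentiveCompatible.decisive_inter_trans (hic : IncentiveCompatible f) (hf : Surjective f)
    {U W : Finset ι} {x y z : V} (hxy : x ≠ y) (hxz : x ≠ z) (hyz : y ≠ z)
    (hU : Decisive f U x y) (hW : Decisive f W y z) : Decisive f (U ∩ W) x z := by
  have hne : x ≠ y ∧ x ≠ z ∧ y ≠ z ∧ y ≠ x ∧ z ≠ x ∧ z ≠ y :=
    ⟨hxy, hxz, hyz, hxy.symm, hxz.symm, hyz.symm⟩
  set L : ι → List V := fun i =>
    if i ∈ U then (if i ∈ W then [x, y, z] else [z, x, y]) else [y, z, x]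
  have hmem : f (fun i => ofList (L i)) ∈ [x, y, z] :=
    hic.apply_ofList_mem hf (List.cons_ne_nil _ _) fun i v => by
      simp only [L]; split_ifs <;> simp <;> tauto
  have hny : f (fun i => ofList (L i)) ≠ y := fun h => hxy <| hU.symm.trans <|
    hic.apply_ofList_eq h fun i => by
      by_cases hiU : i ∈ U <;> by_cases hiW : i ∈ W <;> simp [L, hiU, hiW, hne]
  have hnz : f (fun i => ofList (L i)) ≠ z := fun h => hyz <| hW.symm.trans <|
    hic.apply_ofList_eq h fun i => by
      by_cases hiU : i ∈ U <;> by_cases hiW : i ∈ W <;> simp [L, hiU, hiW, hne]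
  have hx : f (fun i => ofList (L i)) = x := by simpa [hny, hnz] using hmem
  exact hic.apply_ofList_eq hx fun i => by
    by_cases hiU : i ∈ U <;> by_cases hiW : i ∈ W <;> simp [L, hiU, hiW, hne]

lemma IncentiveCompatible.decisive_change_right (hic : IncentiveCompatible f) (hf : Surjective f)
    {U : Finset ι} {x y z : V} (hxy : x ≠ y) (hxz : x ≠ z) (h : Decisive f U x y) :
    Decisive f U x z := by
  rcases eq_or_ne y z with rfl | hyz
  · exact h
  · simpa using hic.decisive_inter_trans hf hxy hxz hyz h (hic.decisive_univ hf y z)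

lemma IncentiveCompatible.decisive_change_left (hic : IncentiveCompatible f) (hf : Surjective f)
    {U : Finset ι} {x y z : V} (hyz : y ≠ z) (hxz : x ≠ z) (h : Decisive f U y z) :
    Decisive f U x z := by
  rcases eq_or_ne x y with rfl | hxy
  · exact h
  · simpa using hic.decisive_inter_trans hf hxy hxz hyz (hic.decisive_univ hf x y) h

lemma IncentiveCompatible.decisive_of_decisive (hic : IncentiveCompatible f) (hf : Surjective f)
    (hV : 3 ≤ Fintype.card V) {U : Finset ι} {x y p q : V} (h : Decisive f U x y)
    (hxy : x ≠ y) (hpq : p ≠ q) : Decisive f U p q := by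
  rcases eq_or_ne q x with rfl | hqx
  · obtain ⟨z, hzq, hzy⟩ := Cardinal.exists_ne_ne_of_three_le (by simpa using hV) q y
    have dqz := hic.decisive_change_right hf hxy hzq.symm h
    have dyz := hic.decisive_change_left hf hzq.symm hzy.symm dqz
    have dyq := hic.decisive_change_right hf hzy.symm hxy.symm dyz
    exact hic.decisive_change_left hf hxy.symm hpq dyq
  · exact hic.decisive_change_left hf hqx.symm hpq (hic.decisive_change_right hf hxy hqx.symm h)

lemma IncentiveCompatible.decisive_inter (hic : IncentiveCompatible f) (hf : Surjective f)
    (hV : 3 ≤ Fintype.card V) {U W : Finset ι} {x y : V} (hxy : x ≠ y)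
    (hU : Decisive f U x y) (hW : Decisive f W x y) : Decisive f (U ∩ W) x y := by
  obtain ⟨z, hzx, hzy⟩ := Cardinal.exists_ne_ne_of_three_le (by simpa using hV) x y
  have hW' := hic.decisive_of_decisive hf hV hW hxy hzy.symm
  exact hic.decisive_change_right hf hzx.symm hxy
    (hic.decisive_inter_trans hf hxy hzx.symm hzy.symm hU hW')

lemma IncentiveCompatible.exists_decisive_singleton
    (hic : IncentiveCompatible f) (hf : Surjective f)
    (hV : 3 ≤ Fintype.card V) {x y : V} (hxy : x ≠ y) : ∃ i, Decisive f {i} x y := by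
  classical
  obtain ⟨U, hU, hmin⟩ := Finset.exists_min_image
    (Finset.univ.filter fun U => Decisive f U x y) Finset.card
    ⟨Finset.univ, by simpa using hic.decisive_univ hf x y⟩
  rw [Finset.mem_filter] at hU
  obtain ⟨i, hi⟩ : U.Nonempty :=
    Finset.nonempty_iff_ne_empty.mpr fun h => hic.not_decisive_empty hf hxy (h ▸ hU.2)
  refine ⟨i, by_contra fun hi' => ?_⟩
  have hcompl := hic.decisive_of_decisive hf hV (hic.decisive_compl hf hi') hxy.symm hxy
  have hle := hmin (U ∩ {i}ᶜ) (by simpa using hic.decisive_inter hf hV hxy hU.2 hcompl)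
  rw [← Finset.sdiff_eq_inter_compl, Finset.sdiff_singleton_eq_erase] at hle
  exact (Finset.card_erase_lt_of_mem hi).not_ge hle

/-- If `i` ranked `a` above `w = f θ`, then `w` would survive, by monotonicity, the move to the
profile where `i` ranks `a ≻ w` and everyone else `w ≻ a` on top. -/
lemma IncentiveCompatible.val_apply_of_decisive (hic : IncentiveCompatible f) {i : ι}
    (hi : ∀ p q : V, p ≠ q → Decisive f {i} p q) (θ : ι → Pref V) {a : V}
    (ha : a ≠ f θ) :
    (θ i).val a (f θ) := by
  by_contra hna
  have h : f (pairProfile {i} a (f θ)) = f θ := by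
    refine hic.maskin_monotone rfl fun j v hv => ?_
    have hvw : v ≠ f θ := by rintro rfl; exact (θ j).2.irrefl _ hv
    rw [pairProfile, ofList_val_iff (by split_ifs <;> simp)]
    rcases eq_or_ne j i with rfl | hji
    · have hva : v ≠ a := by rintro rfl; exact hna hv
      simp [ha, hva, hvw]
    · simp [hji, hvw]
  exact ha ((hi a (f θ) ha).symm.trans h)

end Decisive

end GibbardSatterthwaite

/-- Gibbard–Satterthwaite: an incentive compatible social choice function onto a
set `V` with at least three elements, defined on profiles of strict total orders
(private types) of `n` agents, is a dictatorship. Here `(θ i).val u v` means agent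
`i` strictly prefers `v` over `u`. -/
theorem stmt0 {V : Type} [Fintype V] {n : ℕ}
    (hV : 3 ≤ Fintype.card V)
    (f : (Fin n → {r : V → V → Prop // IsStrictTotalOrder V r}) → V)
    (onto : ∀ v : V, ∃ θ, f θ = v)
    (ic : ¬ ∃ (i : Fin n) (θ : Fin n → {r : V → V → Prop // IsStrictTotalOrder V r})
        (θi' : {r : V → V → Prop // IsStrictTotalOrder V r}) (a b : V),
        f θ = b ∧ (θ i).val b a ∧ f (Function.update θ i θi') = a) :
    ∃ i : Fin n, ∀ θ, ∀ a : V, a ≠ f θ → (θ i).val a (f θ) := by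
  classical
  have hic : GibbardSatterthwaite.IncentiveCompatible f :=
    fun θ i p h => ic ⟨i, θ, p, _, _, rfl, h, rfl⟩
  obtain ⟨x, y, hxy⟩ := Fintype.exists_pair_of_one_lt_card (by omega : 1 < Fintype.card V)
  obtain ⟨i, hi⟩ := hic.exists_decisive_singleton onto hV hxy
  exact ⟨i, fun θ _ => hic.val_apply_of_decisive
    (fun p q hpq => hic.decisive_of_decisive onto hV hi hxy hpq) θ⟩
end

section
/- If colluders are not required to share the same most preferred value, then no (c,f)-resilient consensus protocol exists for any c ≥ 2 (with |V| ≥ 3). Moreover, even requiring that no colluder is worse off after the deviation, no (c,f)-resilient consensus protocol exists for any c ≥ 2 and f ≥ 1. -/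
open Classical

/-- A private type: a strict total order on `V` (`r u v` means `v` is preferred over `u`). -/
abbrev PrefOrd (V : Type) := {r : V → V → Prop // IsStrictTotalOrder V r}

/-- `v` is the most preferred value of preference `θ`. -/
def PrefTop {V : Type} (θ : PrefOrd V) (v : V) : Prop := ∀ u, u ≠ v → θ.val u v

/-- A failure pattern: `F i j r` means `i`'s round-`r` message to `j` succeeds (if sent). -/
abbrev FPat (n : ℕ) := Fin n → Fin n → ℕ → Prop

/-- Well-formedness: once an agent fails to send some message, it sends nothing later. -/
def FPwf {n : ℕ} (F : FPat n) : Prop :=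
  ∀ i j r, ¬ F i j r → ∀ j' r', r < r' → ¬ F i j' r'

/-- Agent `i` is faulty (crashes) in `F`. -/
def FCrashes {n : ℕ} (F : FPat n) (i : Fin n) : Prop := ∃ j r, 1 ≤ r ∧ ¬ F i j r

/-- Agent `i` is correct in `F`. -/
def FCorrect {n : ℕ} (F : FPat n) (i : Fin n) : Prop := ∀ j r, 1 ≤ r → F i j r

/-- A valid failure pattern with at most `f` crashes. -/
def ValidFP {n : ℕ} (f : ℕ) (F : FPat n) : Prop :=
  FPwf F ∧ Set.ncard {i : Fin n | FCrashes F i} ≤ f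

/-- Agent `i` is still alive at the end of round `r` (sent all messages through round `r`). -/
def AliveEnd {n : ℕ} (F : FPat n) (i : Fin n) (r : ℕ) : Prop :=
  ∀ j r', 1 ≤ r' → r' ≤ r → F i j r'

/-- A deterministic synchronous algorithm of one agent: given the history of received
message vectors of past rounds, produce the messages to send in the next round and a
possible decision at the end of the current round. -/
structure SyncAlg (n : ℕ) (M V : Type) where
  step : List (Fin n → Option M) → (Fin n → Option M) × Option V

/-- `histRun A F r i`: the message history of agent `i` at the end of round `r` in the
run of algorithm profile `A` with failure pattern `F`. -/
noncomputable def histRun {n : ℕ} {M V : Type} (A : Fin n → SyncAlg n M V)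
    (F : FPat n) : ℕ → Fin n → List (Fin n → Option M)
  | 0, _ => []
  | r + 1, i =>
    histRun A F r i ++
      [fun j => if F j i (r + 1) then ((A j).step (histRun A F r j)).1 i else none]

/-- The decision output of agent `i` at the end of round `r`. -/
noncomputable def decAt {n : ℕ} {M V : Type} (A : Fin n → SyncAlg n M V)
    (F : FPat n) (i : Fin n) (r : ℕ) : Option V :=
  ((A i).step (histRun A F r i)).2

/-- Agent `i` decides value `v` in the run (at a point where `i` is still alive). -/
def Decides {n : ℕ} {M V : Type} (A : Fin n → SyncAlg n M V) (F : FPat n)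
    (i : Fin n) (v : V) : Prop :=
  ∃ r, AliveEnd F i r ∧ decAt A F i r = some v

/-- The run of `A` under `F` with type profile `θ` satisfies consensus:
Termination, Uniform Agreement and Validity. -/
def ConsOK {n : ℕ} {M V : Type} (A : Fin n → SyncAlg n M V) (F : FPat n)
    (θ : Fin n → PrefOrd V) : Prop :=
  (∀ i, FCorrect F i → ∃ v, Decides A F i v) ∧
  (∀ i j v w, Decides A F i v → Decides A F j w → v = w) ∧
  (∀ i v, Decides A F i v → ∃ j, PrefTop (θ j) v)

/-- The algorithm profile obtained from strategy profile `σ` and type profile `θ`. -/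
def algsOf {n : ℕ} {M V : Type} (σ : Fin n → PrefOrd V → SyncAlg n M V)
    (θ : Fin n → PrefOrd V) : Fin n → SyncAlg n M V :=
  fun i => σ i (θ i)

/-- `σ` is a legal strategy profile for consensus with at most `f` crashes. -/
def Legal {n : ℕ} {M V : Type} (f : ℕ) (σ : Fin n → PrefOrd V → SyncAlg n M V) : Prop :=
  ∀ F θ, ValidFP f F → ConsOK (algsOf σ θ) F θ

/-- Colluders' strategies `τ` (functions of the whole type profile) depend only on
the types of the colluders in `C`. -/
def DepOnlyOn {n : ℕ} {M V : Type} (C : Finset (Fin n))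
    (τ : Fin n → (Fin n → PrefOrd V) → SyncAlg n M V) : Prop :=
  ∀ i ∈ C, ∀ θ θ', (∀ j ∈ C, θ j = θ' j) → τ i θ = τ i θ'

/-- The deviated algorithm profile: colluders in `C` use `τ`, others follow `σ`. -/
noncomputable def devAlgs {n : ℕ} {M V : Type} (σ : Fin n → PrefOrd V → SyncAlg n M V)
    (C : Finset (Fin n)) (τ : Fin n → (Fin n → PrefOrd V) → SyncAlg n M V)
    (θ : Fin n → PrefOrd V) : Fin n → SyncAlg n M V :=
  fun i => if i ∈ C then τ i θ else σ i (θ i)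

/-- Colluder `i` strictly benefits in scenario `(F, θ)` when the profile `A` is
replaced by `A'`: `i` does not crash, the deviated run still reaches consensus in
this scenario, and `i`'s decision improves according to `θ i`. -/
def Benefits {n : ℕ} {M V : Type} (A A' : Fin n → SyncAlg n M V) (F : FPat n)
    (θ : Fin n → PrefOrd V) (i : Fin n) : Prop :=
  ¬ FCrashes F i ∧ ConsOK A' F θ ∧
    ∃ d d', Decides A F i d ∧ Decides A' F i d' ∧ (θ i).val d d'

/-!
Under a legal protocol the failure-free decision is a function `g` of the type profile whose
value is always the top choice of some agent. Such a function is manipulable by two agents: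
on profiles mixing two orders with different tops, there are a profile and agents `p ≠ q` such
that `q` strictly prefers the outcome obtained when `p` reports `q`'s type. The coalition
`{p, q}` in which `p` follows the protocol for `q`'s type remains legal, because validity only
asks for the top value of someone. When `f ≥ 1`, crashing `p` after `q` has decided in both
runs leaves `q` as the only colluder whose decision counts.
-/

namespace PrefOrd

variable {V : Type}

-- The cardinals only serve as a linear order into which every type embeds.
noncomputable def ofTop (x : V) : PrefOrd V :=
  ⟨Function.onFun (· < ·) fun u =>
      if u = x then ⊤ else (embeddingToCardinal u : WithTop Cardinal),
    Function.Injective.isStrictTotalOrder_onFun (r := (· < ·)) fun u v huv => by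
      by_cases hu : u = x <;> by_cases hv : v = x <;> simp_all⟩

lemma prefTop_ofTop (x : V) : PrefTop (ofTop x) x := fun u hu => by
  simp [ofTop, Function.onFun, hu]

end PrefOrd

lemma PrefTop.unique {V : Type} {θ : PrefOrd V} {v w : V} (hv : PrefTop θ v) (hw : PrefTop θ w) :
    v = w := by
  by_contra h
  exact θ.prop.irrefl v (θ.prop.trans v w v (hw v h) (hv w (Ne.symm h)))

open PrefOrd in
theorem exists_profitable_copy {ι V : Type} [Fintype ι] [DecidableEq ι] [Nontrivial ι]
    [Nontrivial V]
    (g : (ι → PrefOrd V) → V) (hg : ∀ θ, ∃ j, PrefTop (θ j) (g θ)) :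
    ∃ (θ : ι → PrefOrd V) (p q : ι), p ≠ q ∧
      (θ q).val (g θ) (g (Function.update θ p (θ q))) := by
  by_contra! hM
  obtain ⟨a, b, hab⟩ := exists_pair_ne V
  obtain ⟨i₀, j₀, hij⟩ := exists_pair_ne ι
  let P (S : Finset ι) : ι → PrefOrd V := S.piecewise (fun _ => ofTop a) (fun _ => ofTop b)
  have hP : ∀ S, g (P S) = a ∨ g (P S) = b := fun S => by
    obtain ⟨j, hj⟩ := hg (P S)
    by_cases hjS : j ∈ S
    · simp only [P, Finset.piecewise_eq_of_mem _ _ _ hjS] at hj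
      exact Or.inl (hj.unique (prefTop_ofTop a))
    · simp only [P, Finset.piecewise_eq_of_notMem _ _ _ hjS] at hj
      exact Or.inr (hj.unique (prefTop_ofTop b))
  have hconst : ∀ x, g (fun _ => ofTop x) = x := fun x =>
    let ⟨_, hj⟩ := hg fun _ => ofTop x
    hj.unique (prefTop_ofTop x)
  -- Starting from `P {i₀}`, switching agents to `a` one by one never moves the outcome to `a`,
  -- since the switch would profit the `a`-voter `i₀`; but unanimity for `a` must give `a`.
  have hsingle : g (P {i₀}) = b := by
    refine (hP _).resolve_left fun ha => hM (P {i₀}) i₀ j₀ hij ?_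
    have hj₀ : P {i₀} j₀ = ofTop b := by simp [P, hij.symm]
    rw [hj₀, ha]
    simp only [P, Finset.piecewise_singleton, Function.update_idem, Function.update_eq_self, hconst]
    exact prefTop_ofTop b a hab
  have hgrow : ∀ S, g (P (insert i₀ S)) = b := by
    intro S
    induction S using Finset.induction_on with
    | empty => exact hsingle
    | insert k S _ ih =>
      refine (hP _).resolve_left fun ha => hM (P (insert i₀ S)) k i₀ ?_ ?_
      · rintro rfl
        rw [Finset.insert_idem] at ha
        exact hab (ha.symm.trans ih)
      · have hi₀ : P (insert i₀ S) i₀ = ofTop a := by simp [P]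
        rw [hi₀, ih, ← Finset.piecewise_insert, Finset.insert_comm, ha]
        exact prefTop_ofTop a b hab.symm
  have huniv := hgrow Finset.univ
  simp only [P, Finset.insert_eq_of_mem (Finset.mem_univ _), Finset.piecewise_univ, hconst] at huniv
  exact hab huniv

section Runs

variable {n : ℕ} {M V : Type}

def failureFree : FPat n := fun _ _ _ => True

lemma validFP_failureFree (f : ℕ) : ValidFP f (failureFree : FPat n) :=
  ⟨fun _ _ _ h => absurd trivial h, by simp [FCrashes, failureFree]⟩

lemma fCorrect_failureFree (i : Fin n) : FCorrect failureFree i := fun _ _ _ => trivial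

lemma FCorrect.not_fCrashes {F : FPat n} {i : Fin n} (h : FCorrect F i) : ¬ FCrashes F i :=
  fun ⟨j, r, hr, hF⟩ => hF (h j r hr)

def crashAfter (p : Fin n) (T : ℕ) : FPat n := fun i _ r => i = p → r ≤ T

lemma fCrashes_crashAfter {p i : Fin n} {T : ℕ} : FCrashes (crashAfter p T) i ↔ i = p := by
  refine ⟨fun ⟨_, _, _, h⟩ => by_contra fun hip => h fun hip' => absurd hip' hip, ?_⟩
  rintro rfl
  exact ⟨i, T + 1, by omega, fun h => by simpa using h rfl⟩

lemma validFP_crashAfter {f : ℕ} (hf : 1 ≤ f) (p : Fin n) (T : ℕ) :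
    ValidFP f (crashAfter p T) := by
  refine ⟨fun i j r hr j' r' hrr' h => hr fun hip => (h hip).trans' hrr'.le, ?_⟩
  have : {i | FCrashes (crashAfter p T) i} = {p} := Set.ext fun _ => fCrashes_crashAfter
  rw [this, Set.ncard_singleton]
  exact hf

lemma histRun_congr (A : Fin n → SyncAlg n M V) {F F' : FPat n} {r : ℕ}
    (h : ∀ i j r', 1 ≤ r' → r' ≤ r → (F i j r' ↔ F' i j r')) (i : Fin n) :
    histRun A F r i = histRun A F' r i := by
  induction r generalizing i with
  | zero => rfl
  | succ r ih =>
    have ih' := ih fun i j r' h₁ h₂ => h i j r' h₁ (h₂.trans r.le_succ)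
    simp only [histRun, ih']
    congr 2
    funext j
    exact if_congr (h j i (r + 1) (by omega) le_rfl) rfl rfl

lemma Decides.exists_crashAfter {A : Fin n → SyncAlg n M V} {p q : Fin n} {v : V}
    (h : Decides A failureFree q v) (hqp : q ≠ p) :
    ∃ T, ∀ T', T ≤ T' → Decides A (crashAfter p T') q v := by
  obtain ⟨r, -, hr⟩ := h
  refine ⟨r, fun T' hT' => ⟨r, fun _ _ _ _ hq => absurd hq hqp, ?_⟩⟩
  have hagree :
      ∀ i j r', 1 ≤ r' → r' ≤ r → (crashAfter p T' i j r' ↔ failureFree i j r') :=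
    fun _ _ _ _ h₂ => iff_of_true (fun _ => h₂.trans hT') trivial
  rwa [decAt, histRun_congr A hagree]

end Runs

section Deviation

variable {n f : ℕ} {M V : Type} {σ : Fin n → PrefOrd V → SyncAlg n M V}

lemma ConsOK.of_range_subset {A : Fin n → SyncAlg n M V} {F : FPat n}
    {θ θ' : Fin n → PrefOrd V}
    (h : ConsOK A F θ') (hθ : Set.range θ' ⊆ Set.range θ) : ConsOK A F θ := by
  refine ⟨h.1, h.2.1, fun i v hv => ?_⟩
  obtain ⟨j, hj⟩ := h.2.2 i v hv
  obtain ⟨k, hk⟩ := hθ ⟨j, rfl⟩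
  exact ⟨k, hk ▸ hj⟩

lemma Legal.exists_outcome [NeZero n] (hσ : Legal f σ) (θ : Fin n → PrefOrd V) :
    ∃ v, (∀ i, Decides (algsOf σ θ) failureFree i v) ∧ ∃ j, PrefTop (θ j) v := by
  obtain ⟨hterm, hagree, hvalid⟩ := hσ failureFree θ (validFP_failureFree f)
  obtain ⟨v, hv⟩ := hterm 0 (fCorrect_failureFree 0)
  refine ⟨v, fun i => ?_, hvalid 0 v hv⟩
  obtain ⟨w, hw⟩ := hterm i (fCorrect_failureFree i)
  rwa [hagree i 0 w v hw hv] at hw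

def copyType (σ : Fin n → PrefOrd V → SyncAlg n M V) (q : Fin n) :
    Fin n → (Fin n → PrefOrd V) → SyncAlg n M V :=
  fun i θ => σ i (θ q)

lemma devAlgs_copyType (p q : Fin n) (θ : Fin n → PrefOrd V) :
    devAlgs σ {p, q} (copyType σ q) θ = algsOf σ (Function.update θ p (θ q)) := by
  funext i
  by_cases hip : i = p
  · subst hip
    simp [devAlgs, copyType, algsOf]
  · by_cases hiq : i = q
    · subst hiq
      simp [devAlgs, copyType, algsOf, hip]
    · simp [devAlgs, algsOf, hip, hiq]

lemma Legal.copyType_deviation (hσ : Legal f σ) (p q : Fin n) {c : ℕ} (hc : 2 ≤ c) :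
    ({p, q} : Finset (Fin n)).Nonempty ∧ ({p, q} : Finset (Fin n)).card ≤ c ∧
      DepOnlyOn {p, q} (copyType σ q) ∧
      ∀ F θ, ValidFP f F → ConsOK (devAlgs σ {p, q} (copyType σ q) θ) F θ := by
  refine ⟨Finset.insert_nonempty _ _, Finset.card_le_two.trans hc,
    fun i _ θ θ' h => by simp [copyType, h q (by simp)], fun F θ hF => ?_⟩
  rw [devAlgs_copyType]
  refine (hσ F _ hF).of_range_subset ?_
  rintro _ ⟨j, rfl⟩
  by_cases hjp : j = p
  · exact ⟨q, by simp [hjp]⟩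
  · exact ⟨j, by simp [hjp]⟩

end Deviation

/-- If colluders are not required to share the same most preferred value, then no
`(c,f)`-resilient consensus protocol exists for `c ≥ 2` (with `|V| ≥ 3`): every legal
strategy profile admits a coalition of at most `c` agents and a deviation that keeps
the profile legal and strictly benefits some colluder in some valid failure pattern
and type profile. Moreover, if `f ≥ 1`, the deviation can be chosen so that
additionally no non-crashed colluder is worse off. -/
theorem stmt19 {V M : Type} [Fintype V] {n f c : ℕ}
    (hn : 2 ≤ n) (hV : 3 ≤ Fintype.card V) (hc : 2 ≤ c)
    (σ : Fin n → PrefOrd V → SyncAlg n M V) (hσ : Legal f σ) :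
    (∃ (C : Finset (Fin n)) (τ : Fin n → (Fin n → PrefOrd V) → SyncAlg n M V),
      C.Nonempty ∧ C.card ≤ c ∧ DepOnlyOn C τ ∧
      (∀ (F : FPat n) (θ : Fin n → PrefOrd V), ValidFP f F →
        ConsOK (devAlgs σ C τ θ) F θ) ∧
      ∃ (F : FPat n) (θ : Fin n → PrefOrd V),
        ValidFP f F ∧ ∃ i ∈ C, Benefits (algsOf σ θ) (devAlgs σ C τ θ) F θ i) ∧
    (1 ≤ f →
      ∃ (C : Finset (Fin n)) (τ : Fin n → (Fin n → PrefOrd V) → SyncAlg n M V),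
        C.Nonempty ∧ C.card ≤ c ∧ DepOnlyOn C τ ∧
        (∀ (F : FPat n) (θ : Fin n → PrefOrd V), ValidFP f F →
          ConsOK (devAlgs σ C τ θ) F θ) ∧
        ∃ (F : FPat n) (θ : Fin n → PrefOrd V),
          ValidFP f F ∧
          (∃ i ∈ C, Benefits (algsOf σ θ) (devAlgs σ C τ θ) F θ i) ∧
          (∀ j ∈ C, ¬ FCrashes F j →
            ∀ d d', Decides (algsOf σ θ) F j d → Decides (devAlgs σ C τ θ) F j d' →
              d = d' ∨ (θ j).val d d')) := by
  have : NeZero n := ⟨by omega⟩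
  have : Nontrivial (Fin n) := Fin.nontrivial_iff_two_le.mpr hn
  have : Nontrivial V := Fintype.one_lt_card_iff_nontrivial.mp (by omega)
  choose g hgdec hgvalid using hσ.exists_outcome
  obtain ⟨θ, p, q, hpq, hbetter⟩ := exists_profitable_copy g hgvalid
  obtain ⟨hne, hcard, hdep, hlegal⟩ := hσ.copyType_deviation p q hc
  have hq : q ∈ ({p, q} : Finset (Fin n)) := by simp
  have hdevq : Decides (devAlgs σ {p, q} (copyType σ q) θ) failureFree q
      (g (Function.update θ p (θ q))) := by
    rw [devAlgs_copyType]
    exact hgdec _ q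
  refine ⟨⟨_, _, hne, hcard, hdep, hlegal, failureFree, θ, validFP_failureFree f, q, hq,
    (fCorrect_failureFree q).not_fCrashes, hlegal _ _ (validFP_failureFree f), _, _,
    hgdec θ q, hdevq, hbetter⟩, fun hf => ?_⟩
  obtain ⟨T₀, hT₀⟩ := (hgdec θ q).exists_crashAfter hpq.symm
  obtain ⟨T₁, hT₁⟩ := hdevq.exists_crashAfter hpq.symm
  have hF := validFP_crashAfter hf p (max T₀ T₁)
  have hq₀ := hT₀ _ (le_max_left T₀ T₁)
  have hq₁ := hT₁ _ (le_max_right T₀ T₁)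
  have hq_alive : ¬ FCrashes (crashAfter p (max T₀ T₁)) q := fun h =>
    hpq (fCrashes_crashAfter.mp h).symm
  refine ⟨_, _, hne, hcard, hdep, hlegal, _, θ, hF,
    ⟨q, hq, hq_alive, hlegal _ _ hF, _, _, hq₀, hq₁, hbetter⟩,
    fun j hj hj_alive d d' hd hd' => ?_⟩
  obtain rfl : j = q := by
    simpa [mt fCrashes_crashAfter.mpr hj_alive] using hj
  rw [(hσ _ θ hF).2.1 _ _ _ _ hd hq₀, (hlegal _ _ hF).2.1 _ _ _ _ hd' hq₁]
  exact Or.inr hbetter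
end
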